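/- arXiv:1805.10285 — 4 statements merged into one kernel-verified Lean document; each statement's English description precedes it below -/
import Mathlib

section
/- Let E be an n-dimensional evolution algebra with natural basis {e_1,...,e_n} and multiplication e_i² = a_{i,i+1} e_{i+1} + a_{in} e_n for i < n−1, e_{n−1}² = a_{n−1,n} e_n, e_n² = 0. If dim E² < n−1, then dim Der(E) ≥ 3. -/
/-!
Write `e_i² = b_i e_{i+1} + t_i e_n` along the chain. If every `b_i` were nonzero, the squares
`e_1², …, e_{n-1}²` would be triangular with respect to the coordinates `e_2, …, e_n`, so
`dim E² ≥ n - 1`; hence some `b_k` vanishes. A basis vector that occurs in no square (always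
`e_1`, and `e_{k+1}` for a break `k < n - 1`) can be sent to an annihilating vector such as
`e_n`, all other basis vectors to `0`: this is a derivation. Two breaks below `n - 1` give three
such derivations. Otherwise the break is unique up to `k = n - 1`, and there is a derivation that
is diagonal modulo `e_n` and fixes `e_n`; it is completed by two maps of the first kind (when
`k = n - 1`, the vector `e_{n-1}` is itself annihilating and serves as the second target). In each
case the three derivations are triangular with respect to suitable matrix coefficients.
-/

/-- The space of derivations, as a submodule of `End K E`. -/
def DerSubmodule (K E : Type*) [Field K] [NonUnitalNonAssocRing E]
    [Module K E] [SMulCommClass K E E] [IsScalarTower K E E] :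
    Submodule K (Module.End K E) where
  carrier := {d | ∀ x y : E, d (x * y) = d x * y + x * d y}
  zero_mem' := by intro x y; simp
  add_mem' := by
    intro d₁ d₂ h₁ h₂ x y
    simp [h₁ x y, h₂ x y, add_mul, mul_add]
    abel
  smul_mem' := by
    intro c d h x y
    simp [h x y, smul_add, smul_mul_assoc, mul_smul_comm]

open Module

theorem linearIndependent_of_triangular {R V ι : Type*} [CommRing R] [IsDomain R]
    [AddCommGroup V] [Module R V] [Fintype ι] [LinearOrder ι]
    (v : ι → V) (φ : ι → V →ₗ[R] R) (hdiag : ∀ i, φ i (v i) ≠ 0)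
    (htri : ∀ i j, i < j → φ i (v j) = 0) : LinearIndependent R v := by
  let M : Matrix ι ι R := Matrix.of fun i j => φ i (v j)
  have hM : M.IsLowerTriangular := fun i j hij => htri i j hij
  have hdet : M.det ≠ 0 := by
    rw [M.det_of_isLowerTriangular hM]
    exact Finset.prod_ne_zero_iff.mpr fun i _ => hdiag i
  exact (Matrix.linearIndependent_cols_of_det_ne_zero hdet).of_comp (LinearMap.pi φ)

theorem Submodule.card_le_finrank_of_triangular {K V ι : Type*} [Field K] [AddCommGroup V]
    [Module K V] [FiniteDimensional K V] [Fintype ι] [LinearOrder ι] (S : Submodule K V)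
    (v : ι → V) (hv : ∀ i, v i ∈ S) (φ : ι → V →ₗ[K] K) (hdiag : ∀ i, φ i (v i) ≠ 0)
    (htri : ∀ i j, i < j → φ i (v j) = 0) : Fintype.card ι ≤ finrank K S :=
  (linearIndependent_of_triangular (fun i => (⟨v i, hv i⟩ : S))
    (fun i => (φ i).comp S.subtype) hdiag htri).fintype_card_le_finrank

section Derivation

variable {K E : Type*} [Field K] [NonUnitalNonAssocRing E]
  [Module K E] [SMulCommClass K E E] [IsScalarTower K E E]

theorem mem_derSubmodule_iff_basis {ι : Type*} (e : Basis ι K E) (d : Module.End K E) :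
    d ∈ DerSubmodule K E ↔ ∀ i j, d (e i * e j) = d (e i) * e j + e i * d (e j) := by
  refine ⟨fun h i j => h (e i) (e j), fun h x y => ?_⟩
  have hB : (LinearMap.mul K E).compr₂ d =
      (LinearMap.mul K E).comp d + (LinearMap.mul K E).compl₂ d :=
    e.ext fun i => e.ext fun j => by simpa using h i j
  simpa using LinearMap.congr_fun₂ hB x y

theorem smulRight_mem_derSubmodule (f : E →ₗ[K] K) (u : E) (hf : ∀ x y, f (x * y) = 0)
    (hu : ∀ x, u * x = 0 ∧ x * u = 0) : f.smulRight u ∈ DerSubmodule K E := by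
  intro x y
  simp [hf, smul_mul_assoc, mul_smul_comm, (hu y).1, (hu x).2]

theorem card_le_finrank_derSubmodule_of_triangular {ι κ : Type*} [Fintype ι] [LinearOrder ι]
    [Finite κ] (e : Basis κ K E) (D : ι → Module.End K E) (hD : ∀ i, D i ∈ DerSubmodule K E)
    (p q : ι → κ) (hdiag : ∀ i, e.coord (q i) (D i (e (p i))) ≠ 0)
    (htri : ∀ i j, i < j → e.coord (q i) (D j (e (p i))) = 0) :
    Fintype.card ι ≤ finrank K (DerSubmodule K E) :=
  have := Module.Finite.of_basis e
  (DerSubmodule K E).card_le_finrank_of_triangular D hD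
    (fun i => (e.coord (q i)).comp (LinearMap.applyₗ (e (p i)))) hdiag htri

end Derivation

section Evolution

variable {K E ι : Type*} [Field K] [NonUnitalNonAssocRing E] [Module K E]

def IsNaturalBasis (e : Basis ι K E) : Prop :=
  ∀ i j, i ≠ j → e i * e j = 0

variable [SMulCommClass K E E] [IsScalarTower K E E]

namespace IsNaturalBasis

variable {e : Basis ι K E}

theorem map_mul_eq_zero (he : IsNaturalBasis e) {M : Type*} [AddCommGroup M] [Module K M]
    (g : E →ₗ[K] M) (hg : ∀ i, g (e i * e i) = 0) (x y : E) : g (x * y) = 0 := by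
  have : (LinearMap.mul K E).compr₂ g = 0 := e.ext fun i => e.ext fun j => by
    obtain rfl | hij := eq_or_ne i j
    · simpa using hg i
    · simp [he i j hij]
  simpa using LinearMap.congr_fun₂ this x y

theorem annihilates_of_sq_eq_zero (he : IsNaturalBasis e) {u : ι} (hu : e u * e u = 0)
    (x : E) : e u * x = 0 ∧ x * e u = 0 := by
  have hl : LinearMap.mul K E (e u) = 0 := e.ext fun j => by
    obtain rfl | h := eq_or_ne u j
    · simpa using hu
    · simpa using he u j h
  have hr : (LinearMap.mul K E).flip (e u) = 0 := e.ext fun j => by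
    obtain rfl | h := eq_or_ne j u
    · simpa using hu
    · simpa using he j u h
  exact ⟨by simpa using LinearMap.congr_fun hl x, by simpa using LinearMap.congr_fun hr x⟩

theorem mem_derSubmodule_of_apply_eq_smul_add (he : IsNaturalBasis e) (D : Module.End K E)
    (c : ι → K) (w : ι → E) (hw : ∀ j x, w j * x = 0 ∧ x * w j = 0)
    (hD : ∀ j, D (e j) = c j • e j + w j)
    (hsq : ∀ i, D (e i * e i) = (2 * c i) • (e i * e i)) : D ∈ DerSubmodule K E := by
  rw [mem_derSubmodule_iff_basis e]
  intro i j
  rw [hD, hD, add_mul, mul_add, (hw i _).1, (hw j _).2, smul_mul_assoc, mul_smul_comm]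
  obtain rfl | hij := eq_or_ne i j
  · rw [hsq, two_mul, add_smul]
    abel
  · simp [he i j hij]

end IsNaturalBasis

end Evolution

section Weight

variable {K : Type*} [Field K] {m : ℕ} (k : Fin (m + 1))

-- Eigenvalues of the diagonal derivation: they double along the chain except across the break
-- `k`, and equal `1/2` at `k` and `1` at the last index.
def chainWeight (j : Fin (m + 2)) : K :=
  2 ^ (j : ℕ) / 2 ^ (if (j : ℕ) ≤ k then (k : ℕ) + 1 else m + 1)

theorem chainWeight_succ {i : Fin (m + 1)} (hi : i ≠ k) :
    chainWeight k i.succ = 2 * (chainWeight k i.castSucc : K) := by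
  have : (i : ℕ) + 1 ≤ k ↔ (i : ℕ) ≤ k := by omega
  simp [chainWeight, this, pow_succ]
  ring

variable [NeZero (2 : K)]

theorem chainWeight_castSucc_self : chainWeight k k.castSucc = (2⁻¹ : K) := by
  simp [chainWeight, pow_succ]
  field_simp

theorem chainWeight_castSucc_last : chainWeight k (Fin.last m).castSucc = (2⁻¹ : K) := by
  simp only [chainWeight, Fin.val_castSucc, Fin.val_last]
  split_ifs with hkm
  · rw [show (k : ℕ) = m by omega, pow_succ]
    field_simp
  · rw [pow_succ]
    field_simp

theorem chainWeight_last : chainWeight k (Fin.last (m + 1)) = (1 : K) := by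
  have : ¬ m + 1 ≤ (k : ℕ) := by omega
  simp [chainWeight, this, two_ne_zero]

end Weight

section Chain

variable {K E : Type*} [Field K] [NonUnitalNonAssocRing E] [Module K E]

/-- Indices start at `0` and `n = m + 2`: `e j` is the paper's `e_{j+1}`, `b i = a_{i+1,i+2}` and
`t i = a_{i+1,n}`. -/
structure IsChainBasis {m : ℕ} (e : Basis (Fin (m + 2)) K E) (b t : Fin (m + 1) → K) : Prop where
  isNatural : IsNaturalBasis e
  sq_castSucc : ∀ i, e i.castSucc * e i.castSucc = b i • e i.succ + t i • e (Fin.last (m + 1))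
  sq_last : e (Fin.last (m + 1)) * e (Fin.last (m + 1)) = 0

namespace IsChainBasis

variable {m : ℕ} {e : Basis (Fin (m + 2)) K E} {b t : Fin (m + 1) → K}

theorem exists_eq_zero_of_finrank_lt (h : IsChainBasis e b t) (ht : t (Fin.last m) = 0)
    (hdim : finrank K (Submodule.span K {z : E | ∃ x y : E, x * y = z}) < m + 1) :
    ∃ k, b k = 0 := by
  have : FiniteDimensional K E := .of_basis e
  by_contra! hb
  have hdiag : ∀ i : Fin (m + 1), e.coord i.succ (e i.castSucc * e i.castSucc) ≠ 0 := by
    intro i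
    rcases i.eq_castSucc_or_eq_last with ⟨i, rfl⟩ | rfl
    · simpa [h.sq_castSucc, Finsupp.single_apply, Fin.succ_ne_last_iff] using hb _
    · simpa [h.sq_castSucc, ht] using hb _
  have htri : ∀ i j : Fin (m + 1), i < j → e.coord i.succ (e j.castSucc * e j.castSucc) = 0 := by
    intro i j hij
    simp [h.sq_castSucc, hij.ne', (hij.trans_le (Fin.le_last j)).ne]
  refine hdim.not_ge ?_
  simpa using (Submodule.span K {z : E | ∃ x y : E, x * y = z}).card_le_finrank_of_triangular
    _ (fun i => Submodule.subset_span ⟨_, _, rfl⟩) _ hdiag htri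

variable [SMulCommClass K E E] [IsScalarTower K E E]

theorem last_annihilates (h : IsChainBasis e b t) (x : E) :
    e (Fin.last (m + 1)) * x = 0 ∧ x * e (Fin.last (m + 1)) = 0 :=
  h.isNatural.annihilates_of_sq_eq_zero h.sq_last x

theorem coord_mul_eq_zero (h : IsChainBasis e b t) {q : Fin (m + 2)} (hq : q ≠ Fin.last (m + 1))
    (hb : ∀ i, i.succ = q → b i = 0) (x y : E) : e.coord q (x * y) = 0 := by
  refine h.isNatural.map_mul_eq_zero (e.coord q) (fun j => ?_) x y
  induction j using Fin.lastCases with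
  | last => simp [h.sq_last]
  | cast i =>
    rw [h.sq_castSucc]
    by_cases hi : i.succ = q <;> simp [hi, hq.symm, hb]

theorem exists_mem_derSubmodule_apply_last_eq_self [NeZero (2 : K)] (h : IsChainBasis e b t)
    {k : Fin (m + 1)} (hk : b k = 0) (hb : ∀ i, b i = 0 → i = k ∨ i = Fin.last m) :
    ∃ D ∈ DerSubmodule K E, D (e (Fin.last (m + 1))) = e (Fin.last (m + 1)) := by
  have h2 : (2 : K) * 2⁻¹ = 1 := mul_inv_cancel₀ two_ne_zero
  let w : Fin (m + 2) → K := chainWeight k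
  -- The `e_n`-components `γ` absorb the terms `t i • e_n`; where `b i = 0` the weight is `1/2`
  -- and these terms are already balanced.
  let γ : Fin (m + 2) → K := Fin.cons 0 fun i => t i * (2 * w i.castSucc - 1) / b i
  let D := e.constr K fun j => w j • e j + γ j • e (Fin.last (m + 1))
  have hD : ∀ j, D (e j) = w j • e j + γ j • e (Fin.last (m + 1)) := e.constr_basis K _
  have hDlast : D (e (Fin.last (m + 1))) = e (Fin.last (m + 1)) := by
    have hγ : γ (Fin.last (m + 1)) = 0 := by
      simp [γ, w, ← Fin.succ_last, chainWeight_castSucc_last, h2]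
    simp [hD, hγ, w, chainWeight_last]
  refine ⟨D, h.isNatural.mem_derSubmodule_of_apply_eq_smul_add D w _
    (fun j x => by simp [smul_mul_assoc, mul_smul_comm, (h.last_annihilates x).1,
      (h.last_annihilates x).2]) hD fun j => ?_, hDlast⟩
  induction j using Fin.lastCases with
  | last => simp [h.sq_last]
  | cast i =>
    have h₁ : b i * w i.succ = 2 * w i.castSucc * b i := by
      obtain rfl | hik := eq_or_ne i k
      · simp [hk]
      · simp only [w, chainWeight_succ k hik]
        ring
    have h₂ : b i * γ i.succ + t i = 2 * w i.castSucc * t i := by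
      by_cases hbi : b i = 0
      · obtain rfl | rfl := hb i hbi
        · simp [hbi, w, chainWeight_castSucc_self, h2]
        · simp [hbi, w, chainWeight_castSucc_last, h2]
      · simp only [γ, Fin.cons_succ]
        field_simp
        ring
    rw [h.sq_castSucc, map_add, map_smul, map_smul, hDlast, hD]
    match_scalars
    · linear_combination h₁
    · linear_combination h₂

theorem coord_smulRight_mem_derSubmodule (h : IsChainBasis e b t) {q : Fin (m + 2)}
    (hq : q ≠ Fin.last (m + 1)) (hb : ∀ i, i.succ = q → b i = 0) {u : E}
    (hu : ∀ x, u * x = 0 ∧ x * u = 0) : (e.coord q).smulRight u ∈ DerSubmodule K E :=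
  smulRight_mem_derSubmodule _ u (h.coord_mul_eq_zero hq hb) hu

theorem coord_zero_smulRight_mem_derSubmodule (h : IsChainBasis e b t) {u : E}
    (hu : ∀ x, u * x = 0 ∧ x * u = 0) : (e.coord 0).smulRight u ∈ DerSubmodule K E :=
  h.coord_smulRight_mem_derSubmodule Fin.last_pos.ne (fun i hi => absurd hi i.succ_ne_zero) hu

theorem coord_succ_smulRight_mem_derSubmodule (h : IsChainBasis e b t) {k : Fin (m + 1)}
    (hk : k ≠ Fin.last m) (hbk : b k = 0) {u : E} (hu : ∀ x, u * x = 0 ∧ x * u = 0) :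
    (e.coord k.succ).smulRight u ∈ DerSubmodule K E :=
  h.coord_smulRight_mem_derSubmodule (by simpa using hk)
    (fun _ hi => Fin.succ_injective _ hi ▸ hbk) hu

theorem three_le_finrank_derSubmodule_of_two_breaks (h : IsChainBasis e b t) {k k' : Fin (m + 1)}
    (hkk' : k ≠ k') (hk : k ≠ Fin.last m) (hk' : k' ≠ Fin.last m) (hbk : b k = 0)
    (hbk' : b k' = 0) : 3 ≤ finrank K (DerSubmodule K E) := by
  let q : Fin 3 → Fin (m + 2) := ![0, k.succ, k'.succ]
  have hD : ∀ i, (e.coord (q i)).smulRight (e (Fin.last (m + 1))) ∈ DerSubmodule K E := by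
    intro i
    fin_cases i
    · exact h.coord_zero_smulRight_mem_derSubmodule h.last_annihilates
    · exact h.coord_succ_smulRight_mem_derSubmodule hk hbk h.last_annihilates
    · exact h.coord_succ_smulRight_mem_derSubmodule hk' hbk' h.last_annihilates
  refine (card_le_finrank_derSubmodule_of_triangular e _ hD q (fun _ => Fin.last (m + 1))
    ?_ ?_).trans_eq' (by simp)
  · intro i; fin_cases i <;> simp [q]
  · intro i j hij; fin_cases i <;> fin_cases j <;> simp_all [q]

theorem three_le_finrank_derSubmodule_of_unique_break [NeZero (2 : K)] (h : IsChainBasis e b t)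
    {k : Fin (m + 1)} (hk : k ≠ Fin.last m) (hbk : b k = 0)
    (hb : ∀ i, b i = 0 → i = k ∨ i = Fin.last m) : 3 ≤ finrank K (DerSubmodule K E) := by
  obtain ⟨D, hD, hDlast⟩ := h.exists_mem_derSubmodule_apply_last_eq_self hbk hb
  let p : Fin 3 → Fin (m + 2) := ![Fin.last (m + 1), 0, k.succ]
  refine (card_le_finrank_derSubmodule_of_triangular e
    ![D, (e.coord 0).smulRight (e (Fin.last (m + 1))),
      (e.coord k.succ).smulRight (e (Fin.last (m + 1)))] ?_
    p (fun _ => Fin.last (m + 1)) ?_ ?_).trans_eq' (by simp)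
  · intro i
    fin_cases i
    · exact hD
    · exact h.coord_zero_smulRight_mem_derSubmodule h.last_annihilates
    · exact h.coord_succ_smulRight_mem_derSubmodule hk hbk h.last_annihilates
  · intro i; fin_cases i <;> simp [p, hDlast]
  · intro i j hij; fin_cases i <;> fin_cases j <;> simp_all [p]

theorem three_le_finrank_derSubmodule_of_last_break [NeZero (2 : K)] (h : IsChainBasis e b t)
    (ht : t (Fin.last m) = 0) (hlast : b (Fin.last m) = 0)
    (hb : ∀ i, b i = 0 → i = Fin.last m) : 3 ≤ finrank K (DerSubmodule K E) := by
  obtain ⟨D, hD, hDlast⟩ := h.exists_mem_derSubmodule_apply_last_eq_self hlast fun i hi => .inl (hb i hi)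
  have hρ : e (Fin.last m).castSucc * e (Fin.last m).castSucc = 0 := by
    simp [h.sq_castSucc, hlast, ht]
  let p : Fin 3 → Fin (m + 2) := ![Fin.last (m + 1), 0, 0]
  let q : Fin 3 → Fin (m + 2) := ![Fin.last (m + 1), Fin.last (m + 1), (Fin.last m).castSucc]
  refine (card_le_finrank_derSubmodule_of_triangular e
    ![D, (e.coord 0).smulRight (e (Fin.last (m + 1))),
      (e.coord 0).smulRight (e (Fin.last m).castSucc)] ?_ p q ?_ ?_).trans_eq' (by simp)
  · intro i
    fin_cases i
    · exact hD
    · exact h.coord_zero_smulRight_mem_derSubmodule h.last_annihilates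
    · exact h.coord_zero_smulRight_mem_derSubmodule (h.isNatural.annihilates_of_sq_eq_zero hρ)
  · intro i; fin_cases i <;> simp [p, q, hDlast]
  · intro i j hij; fin_cases i <;> fin_cases j <;> simp_all [p, q]

theorem three_le_finrank_derSubmodule [NeZero (2 : K)] (h : IsChainBasis e b t)
    (ht : t (Fin.last m) = 0)
    (hdim : finrank K (Submodule.span K {z : E | ∃ x y : E, x * y = z}) < m + 1) :
    3 ≤ finrank K (DerSubmodule K E) := by
  obtain ⟨k, hk⟩ := h.exists_eq_zero_of_finrank_lt ht hdim
  by_cases hlast : ∀ i, b i = 0 → i = Fin.last m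
  · exact h.three_le_finrank_derSubmodule_of_last_break ht (hlast k hk ▸ hk) hlast
  push Not at hlast
  obtain ⟨k, hbk, hk⟩ := hlast
  by_cases hunique : ∀ i, b i = 0 → i = k ∨ i = Fin.last m
  · exact h.three_le_finrank_derSubmodule_of_unique_break hk hbk hunique
  push Not at hunique
  obtain ⟨k', hbk', hk'k, hk'⟩ := hunique
  exact h.three_le_finrank_derSubmodule_of_two_breaks hk'k.symm hk hk' hbk hbk'

end IsChainBasis

end Chain

/-- for the evolution algebra with `e_i² = a_{i,i+1}e_{i+1} + a_{in}e_n`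
(`i < n−1`), `e_{n−1}² = a_{n−1,n}e_n`, `e_n² = 0`, if `dim E² < n − 1` then
`dim Der(E) ≥ 3`. -/
theorem stmt7 {K E : Type*} [Field K] [CharZero K] [NonUnitalNonAssocRing E]
    [Module K E] [SMulCommClass K E E] [IsScalarTower K E E]
    (n : ℕ) (hn : 2 ≤ n) (a : Fin n → Fin n → K) (e : Module.Basis (Fin n) K E)
    (hzero : ∀ i j : Fin n, i ≠ j → e i * e j = 0)
    (h1 : ∀ i : Fin n, ∀ hi : (i : ℕ) < n - 2,
      e i * e i = a i ⟨(i : ℕ) + 1, by omega⟩ • e ⟨(i : ℕ) + 1, by omega⟩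
        + a i ⟨n - 1, by omega⟩ • e ⟨n - 1, by omega⟩)
    (h2 : e ⟨n - 2, by omega⟩ * e ⟨n - 2, by omega⟩
        = a ⟨n - 2, by omega⟩ ⟨n - 1, by omega⟩ • e ⟨n - 1, by omega⟩)
    (h3 : e ⟨n - 1, by omega⟩ * e ⟨n - 1, by omega⟩ = 0)
    (hdim : Module.finrank K ↥(Submodule.span K {z : E | ∃ x y : E, x * y = z}) < n - 1) :
    3 ≤ Module.finrank K ↥(DerSubmodule K E) := by
  obtain ⟨m, rfl⟩ : ∃ m, n = m + 2 := ⟨n - 2, by omega⟩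
  let t : Fin (m + 1) → K := fun i => if (i : ℕ) < m then a i.castSucc (Fin.last (m + 1)) else 0
  have h : IsChainBasis e (fun i => a i.castSucc i.succ) t := by
    refine ⟨hzero, fun i => ?_, h3⟩
    rcases i.eq_castSucc_or_eq_last with ⟨i, rfl⟩ | rfl
    · have ht : t i.castSucc = a i.castSucc.castSucc (Fin.last (m + 1)) := if_pos i.isLt
      rw [ht]
      exact h1 i.castSucc.castSucc i.isLt
    · simp only [t, Fin.val_last, lt_irrefl, if_false, zero_smul, add_zero]
      exact h2
  exact h.three_le_finrank_derSubmodule (by simp [t]) hdim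
end

section
/- Let E be an n-dimensional nilpotent evolution algebra with maximal nilindex 2^{n−1}+1, where n > 2. Then every local derivation of E is a derivation. -/
/-!
In the natural basis, the matrix `(d_{ji})` of a derivation `d` (with `d e_i = ∑ d_{ji} e_j`) is
diagonal except for its last row, and comparing `e_{i+1}`-coefficients of `d (e_i e_i)` gives
`d_{i+1,i+1} = 2 d_{ii}`. Since `d (e_i e_i) = 2 d_{ii} e_i e_i = ∑_{j>i} a_{ij} d e_j`, a downward
induction shows that a derivation with one vanishing diagonal entry (hence, in characteristic zero,
all of them) kills `e_1, …, e_{n-1}`. So on `e_1, …, e_{n-1}` a derivation is determined by any one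
of its diagonal entries.

For a local derivation `Δ`, pick a derivation `D` with `Δ (∑ e_i) = D (∑ e_i)`. The diagonal entries
of `Δ` and `D` agree except possibly the last one, so `Δ = D` on `e_i` for `0 < i < n - 1`; the
point `e_1 + e_{n-1}`, where `1 < n - 1`, gives `Δ e_{n-1} = D e_{n-1}`, and then
`Δ e_0 = D e_0` follows from `Δ (∑ e_i) = D (∑ e_i)`.
-/

/-- A derivation of a (non-associative, non-unital) `K`-algebra. -/
def IsDeriv {K E : Type*} [Field K] [NonUnitalNonAssocRing E] [Module K E]
    (d : E →ₗ[K] E) : Prop :=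
  ∀ x y : E, d (x * y) = d x * y + x * d y

/-- A local derivation: a linear map agreeing at each point with some derivation. -/
def IsLocalDeriv {K E : Type*} [Field K] [NonUnitalNonAssocRing E] [Module K E]
    (Δ : E →ₗ[K] E) : Prop :=
  ∀ u : E, ∃ d : Module.End K E, IsDeriv d ∧ Δ u = d u

open Finset

lemma IsDeriv.sub {K E : Type*} [Field K] [NonUnitalNonAssocRing E] [Module K E]
    {d d' : E →ₗ[K] E} (hd : IsDeriv d) (hd' : IsDeriv d') : IsDeriv (d - d') := by
  intro x y
  simp only [LinearMap.sub_apply, hd x y, hd' x y, sub_mul, mul_sub]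
  abel

section NaturalBasis

variable {K E ι : Type*} [Field K] [NonUnitalNonAssocRing E] [Module K E] [Fintype ι]
  {e : Module.Basis ι K E}

lemma mul_basis_eq_repr_smul [IsScalarTower K E E] (hzero : ∀ i j, i ≠ j → e i * e j = 0)
    (x : E) (j : ι) :
    x * e j = e.repr x j • (e j * e j) := by
  conv_lhs => rw [← e.sum_repr x, sum_mul]
  refine (sum_eq_single j (fun i _ hij => ?_) (absurd (mem_univ j))).trans (smul_mul_assoc ..)
  rw [smul_mul_assoc, hzero i j hij, smul_zero]

lemma basis_mul_eq_repr_smul [SMulCommClass K E E] (hzero : ∀ i j, i ≠ j → e i * e j = 0)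
    (y : E) (i : ι) :
    e i * y = e.repr y i • (e i * e i) := by
  conv_lhs => rw [← e.sum_repr y, mul_sum]
  refine (sum_eq_single i (fun j _ hji => ?_) (absurd (mem_univ i))).trans (mul_smul_comm ..)
  rw [mul_smul_comm, hzero i j hji.symm, smul_zero]

variable [SMulCommClass K E E] [IsScalarTower K E E]

lemma IsDeriv.map_basis_mul_self (hzero : ∀ i j, i ≠ j → e i * e j = 0) {d : E →ₗ[K] E}
    (hd : IsDeriv d) (i : ι) : d (e i * e i) = (2 * e.repr (d (e i)) i) • (e i * e i) := by
  rw [hd, mul_basis_eq_repr_smul hzero (d (e i)), basis_mul_eq_repr_smul hzero (d (e i)), two_mul,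
    add_smul]

lemma IsDeriv.repr_smul_add_repr_smul_eq_zero (hzero : ∀ i j, i ≠ j → e i * e j = 0)
    {d : E →ₗ[K] E} (hd : IsDeriv d) {i j : ι} (hij : i ≠ j) :
    e.repr (d (e i)) j • (e j * e j) + e.repr (d (e j)) i • (e i * e i) = 0 := by
  rw [← mul_basis_eq_repr_smul hzero, ← basis_mul_eq_repr_smul hzero, ← hd, hzero i j hij,
    map_zero]

end NaturalBasis

section MaximalNilindex

variable {K E : Type*} [Field K] [NonUnitalNonAssocRing E] [Module K E]
  {n : ℕ} {a : Fin n → Fin n → K} {e : Module.Basis (Fin n) K E}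

lemma repr_basis_mul_self
    (hsq : ∀ i : Fin n, e i * e i = ∑ j ∈ univ.filter (fun j => i < j), a i j • e j)
    (i m : Fin n) : e.repr (e i * e i) m = if i < m then a i m else 0 := by
  simp [hsq i, Finsupp.single_apply]

lemma basis_mul_self_ne_zero
    (hsq : ∀ i : Fin n, e i * e i = ∑ j ∈ univ.filter (fun j => i < j), a i j • e j)
    (hne : ∀ i : Fin n, ∀ hi : (i : ℕ) + 1 < n, a i ⟨(i : ℕ) + 1, hi⟩ ≠ 0)
    {i : Fin n} (hi : (i : ℕ) + 1 < n) : e i * e i ≠ 0 := by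
  intro h
  have h' := congrArg (fun z => e.repr z ⟨(i : ℕ) + 1, hi⟩) h
  simp only [repr_basis_mul_self hsq, Fin.lt_def, lt_add_one, if_true, map_zero,
    Finsupp.coe_zero, Pi.zero_apply] at h'
  exact hne i hi h'

/-- The normal form of an `n`-dimensional nilpotent evolution algebra of maximal nilindex
`2 ^ (n - 1) + 1`. -/
structure IsMaxNilindexBasis (e : Module.Basis (Fin n) K E) (a : Fin n → Fin n → K) : Prop where
  mul_of_ne : ∀ i j : Fin n, i ≠ j → e i * e j = 0
  mul_self : ∀ i : Fin n, e i * e i = ∑ j ∈ univ.filter (fun j => i < j), a i j • e j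
  coeff_succ_ne_zero : ∀ i : Fin n, ∀ hi : (i : ℕ) + 1 < n, a i ⟨(i : ℕ) + 1, hi⟩ ≠ 0

variable [SMulCommClass K E E] [IsScalarTower K E E]

lemma IsDeriv.repr_eq_zero_of_lt (he : IsMaxNilindexBasis e a)
    {d : E →ₗ[K] E} (hd : IsDeriv d) {i j : Fin n} (hij : i < j) :
    e.repr (d (e j)) i = 0 := by
  have hi : (i : ℕ) + 1 < n := lt_of_le_of_lt (Nat.succ_le_of_lt hij) j.isLt
  have h := congrArg (fun z => e.repr z ⟨(i : ℕ) + 1, hi⟩)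
    (hd.repr_smul_add_repr_smul_eq_zero he.mul_of_ne hij.ne')
  have hj : ¬ (j : ℕ) < i + 1 := by rw [Fin.lt_def] at hij; omega
  simp only [map_add, map_smul, Finsupp.add_apply, Finsupp.smul_apply, smul_eq_mul,
    repr_basis_mul_self he.mul_self, Fin.lt_def, lt_add_one, if_true, if_neg hj, mul_zero,
    add_zero, map_zero, Finsupp.coe_zero, Pi.zero_apply] at h
  exact (mul_eq_zero.mp h).resolve_right (he.coeff_succ_ne_zero i hi)

lemma IsDeriv.repr_eq_zero_of_ne (he : IsMaxNilindexBasis e a)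
    {d : E →ₗ[K] E} (hd : IsDeriv d) {i j : Fin n} (hji : j ≠ i) (hj : (j : ℕ) + 1 < n) :
    e.repr (d (e i)) j = 0 := by
  rcases hji.lt_or_gt with hlt | hgt
  · exact hd.repr_eq_zero_of_lt he hlt
  · have h := hd.repr_smul_add_repr_smul_eq_zero he.mul_of_ne hgt.ne
    rw [hd.repr_eq_zero_of_lt he hgt, zero_smul, add_zero] at h
    exact (smul_eq_zero.mp h).resolve_right
      (basis_mul_self_ne_zero he.mul_self he.coeff_succ_ne_zero hj)

lemma IsDeriv.repr_succ_diag (he : IsMaxNilindexBasis e a)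
    {d : E →ₗ[K] E} (hd : IsDeriv d) (i : Fin n) (hi : (i : ℕ) + 1 < n) :
    e.repr (d (e ⟨(i : ℕ) + 1, hi⟩)) ⟨(i : ℕ) + 1, hi⟩ = 2 * e.repr (d (e i)) i := by
  set s : Fin n := ⟨(i : ℕ) + 1, hi⟩
  have his : i < s := by simp [s, Fin.lt_def]
  have h := congrArg (fun z => e.repr z s) (hd.map_basis_mul_self he.mul_of_ne i)
  rw [map_smul, Finsupp.smul_apply, repr_basis_mul_self he.mul_self, if_pos his, he.mul_self i,
    map_sum, map_sum, sum_apply', sum_eq_single s] at h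
  · rw [map_smul, map_smul, Finsupp.smul_apply, smul_eq_mul, smul_eq_mul] at h
    exact mul_left_cancel₀ (he.coeff_succ_ne_zero i hi) (h.trans (mul_comm _ _))
  · intro j hj hjs
    have hsj : s < j := by
      have := (mem_filter.mp hj).2
      rw [Fin.lt_def] at this ⊢
      exact lt_of_le_of_ne this (fun h => hjs (Fin.ext h.symm))
    rw [map_smul, map_smul, Finsupp.smul_apply, hd.repr_eq_zero_of_lt he hsj, smul_zero]
  · exact fun h => absurd (mem_filter.mpr ⟨mem_univ s, his⟩) h

lemma IsDeriv.repr_diag_eq_two_pow_mul (he : IsMaxNilindexBasis e a)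
    {d : E →ₗ[K] E} (hd : IsDeriv d) (i : Fin n) :
    e.repr (d (e i)) i = 2 ^ (i : ℕ) * e.repr (d (e ⟨0, i.pos⟩)) ⟨0, i.pos⟩ := by
  obtain ⟨m, hm⟩ := i
  induction m with
  | zero => simp
  | succ k ih =>
    rw [hd.repr_succ_diag he ⟨k, by omega⟩ hm, ih (by omega), pow_succ]
    ring

lemma IsDeriv.repr_diag_eq_zero [CharZero K] (he : IsMaxNilindexBasis e a)
    {d : E →ₗ[K] E} (hd : IsDeriv d) {k : Fin n} (hk : e.repr (d (e k)) k = 0) (i : Fin n) :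
    e.repr (d (e i)) i = 0 := by
  rw [hd.repr_diag_eq_two_pow_mul he k] at hk
  rw [hd.repr_diag_eq_two_pow_mul he i,
    (mul_eq_zero.mp hk).resolve_left (pow_ne_zero _ two_ne_zero), mul_zero]

lemma IsDeriv.map_basis_eq_zero_of_repr_diag_eq_zero (he : IsMaxNilindexBasis e a)
    {d : E →ₗ[K] E} (hd : IsDeriv d) (hdiag : ∀ i, e.repr (d (e i)) i = 0) (i : Fin n)
    (hi : (i : ℕ) ≠ 0) : d (e i) = 0 := by
  induction i using WellFoundedGT.induction with
  | _ i ih =>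
  obtain ⟨p, hpi⟩ : ∃ p : Fin n, (p : ℕ) + 1 = i := ⟨⟨(i : ℕ) - 1, by omega⟩, by simp; omega⟩
  have hp : (p : ℕ) + 1 < n := hpi ▸ i.isLt
  have hsucc : (⟨(p : ℕ) + 1, hp⟩ : Fin n) = i := Fin.ext hpi
  have h := hd.map_basis_mul_self he.mul_of_ne p
  rw [hdiag p, mul_zero, zero_smul, he.mul_self p, map_sum, sum_eq_single i] at h
  · rw [map_smul] at h
    exact (smul_eq_zero.mp h).resolve_left (hsucc ▸ he.coeff_succ_ne_zero p hp)
  · intro j hj hji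
    have hpj := Fin.lt_def.mp (mem_filter.mp hj).2
    have hij : i < j := Fin.lt_def.mpr (by have := Fin.val_ne_of_ne hji; omega)
    rw [map_smul, ih j hij (by omega), smul_zero]
  · exact fun h => absurd (mem_filter.mpr ⟨mem_univ i, Fin.lt_def.mpr (by omega)⟩) h

lemma IsDeriv.map_basis_eq_of_repr_diag_eq [CharZero K] (he : IsMaxNilindexBasis e a)
    {d d' : E →ₗ[K] E} (hd : IsDeriv d) (hd' : IsDeriv d') {k : Fin n}
    (hk : e.repr (d (e k)) k = e.repr (d' (e k)) k) (m : Fin n) (hm : (m : ℕ) ≠ 0) :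
    d (e m) = d' (e m) := by
  have hsub := hd.sub hd'
  have hk' : e.repr ((d - d') (e k)) k = 0 := by simp [hk]
  exact sub_eq_zero.mp <| hsub.map_basis_eq_zero_of_repr_diag_eq_zero he
    (hsub.repr_diag_eq_zero he hk') m hm

lemma IsLocalDeriv.repr_eq_zero_of_lt (he : IsMaxNilindexBasis e a)
    {Δ : E →ₗ[K] E} (hΔ : IsLocalDeriv Δ) {i j : Fin n} (hij : i < j) :
    e.repr (Δ (e j)) i = 0 := by
  obtain ⟨d, hd, hΔd⟩ := hΔ (e j)
  rw [hΔd]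
  exact hd.repr_eq_zero_of_lt he hij

lemma IsLocalDeriv.repr_eq_zero_of_ne (he : IsMaxNilindexBasis e a)
    {Δ : E →ₗ[K] E} (hΔ : IsLocalDeriv Δ) {i j : Fin n} (hji : j ≠ i) (hj : (j : ℕ) + 1 < n) :
    e.repr (Δ (e i)) j = 0 := by
  obtain ⟨d, hd, hΔd⟩ := hΔ (e i)
  rw [hΔd]
  exact hd.repr_eq_zero_of_ne he hji hj

lemma IsLocalDeriv.map_basis_eq_of_repr_diag_eq [CharZero K] (he : IsMaxNilindexBasis e a)
    {Δ D : E →ₗ[K] E} (hΔ : IsLocalDeriv Δ) (hD : IsDeriv D) {m : Fin n} (hm : (m : ℕ) ≠ 0)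
    (hmm : e.repr (Δ (e m)) m = e.repr (D (e m)) m) : Δ (e m) = D (e m) := by
  obtain ⟨d, hd, hΔd⟩ := hΔ (e m)
  rw [hΔd] at hmm ⊢
  exact hd.map_basis_eq_of_repr_diag_eq he hD hmm m hm

lemma IsLocalDeriv.repr_diag_eq_of_map_sum_eq (he : IsMaxNilindexBasis e a)
    {Δ D : E →ₗ[K] E} (hΔ : IsLocalDeriv Δ) (hD : IsDeriv D)
    (hsum : Δ (∑ i, e i) = D (∑ i, e i)) {j : Fin n} (hj : (j : ℕ) + 1 < n) :
    e.repr (Δ (e j)) j = e.repr (D (e j)) j := by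
  have h := congrArg (fun z => e.repr z j) hsum
  simp only [map_sum, Finsupp.coe_finsetSum, Finset.sum_apply] at h
  rwa [sum_eq_single j (fun i _ hij => hΔ.repr_eq_zero_of_ne he hij.symm hj)
      (absurd (mem_univ j)),
    sum_eq_single j (fun i _ hij => hD.repr_eq_zero_of_ne he hij.symm hj)
      (absurd (mem_univ j))] at h

lemma IsLocalDeriv.map_basis_eq_of_lt [CharZero K] (he : IsMaxNilindexBasis e a)
    {Δ D : E →ₗ[K] E} (hΔ : IsLocalDeriv Δ) (hD : IsDeriv D) {i j : Fin n} (hij : i < j)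
    (hi : (i : ℕ) ≠ 0) (hΔD : Δ (e i) = D (e i)) : Δ (e j) = D (e j) := by
  obtain ⟨d, hd, hΔd⟩ := hΔ (e i + e j)
  have hii : e.repr (d (e i)) i = e.repr (D (e i)) i := by
    have h := congrArg (fun z => e.repr z i) hΔd
    simp only [map_add, Finsupp.add_apply, hΔ.repr_eq_zero_of_lt he hij,
      hd.repr_eq_zero_of_lt he hij, add_zero, hΔD] at h
    exact h.symm
  have hj : (j : ℕ) ≠ 0 := by rw [Fin.lt_def] at hij; omega
  rw [map_add, map_add, hΔD, hd.map_basis_eq_of_repr_diag_eq he hD hii i hi,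
    hd.map_basis_eq_of_repr_diag_eq he hD hii j hj] at hΔd
  exact add_left_cancel hΔd

lemma IsLocalDeriv.map_basis_eq_of_map_sum_eq [CharZero K] (hn : 2 < n)
    (he : IsMaxNilindexBasis e a)
    {Δ D : E →ₗ[K] E} (hΔ : IsLocalDeriv Δ) (hD : IsDeriv D)
    (hsum : Δ (∑ i, e i) = D (∑ i, e i)) (m : Fin n) (hm : (m : ℕ) ≠ 0) :
    Δ (e m) = D (e m) := by
  have hinner : ∀ m : Fin n, (m : ℕ) ≠ 0 → (m : ℕ) + 1 < n → Δ (e m) = D (e m) :=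
    fun m hm hm' => hΔ.map_basis_eq_of_repr_diag_eq he hD hm
      (hΔ.repr_diag_eq_of_map_sum_eq he hD hsum hm')
  by_cases hm' : (m : ℕ) + 1 < n
  · exact hinner m hm hm'
  · exact hΔ.map_basis_eq_of_lt he hD (i := ⟨1, by omega⟩) (by rw [Fin.lt_def]; simp only; omega)
      one_ne_zero (hinner _ one_ne_zero (by simp only; omega))

end MaximalNilindex

/-- for an `n`-dimensional nilpotent evolution algebra with maximal
nilindex `2^{n−1}+1` and `n > 2`, every local derivation is a derivation. -/
theorem stmt10 {K E : Type*} [Field K] [CharZero K] [NonUnitalNonAssocRing E]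
    [Module K E] [SMulCommClass K E E] [IsScalarTower K E E]
    (n : ℕ) (hn : 2 < n) (a : Fin n → Fin n → K) (e : Module.Basis (Fin n) K E)
    (hzero : ∀ i j : Fin n, i ≠ j → e i * e j = 0)
    (hsq : ∀ i : Fin n, e i * e i = ∑ j ∈ Finset.univ.filter (fun j => i < j), a i j • e j)
    (hne : ∀ i : Fin n, ∀ hi : (i : ℕ) + 1 < n, a i ⟨(i : ℕ) + 1, hi⟩ ≠ 0)
    (Δ : E →ₗ[K] E) (hΔ : IsLocalDeriv Δ) :
    IsDeriv Δ := by
  have he : IsMaxNilindexBasis e a := ⟨hzero, hsq, hne⟩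
  obtain ⟨D, hD, hsum⟩ := hΔ (∑ i, e i)
  have heq := hΔ.map_basis_eq_of_map_sum_eq hn he hD hsum
  suffices Δ = D by rwa [this]
  refine e.ext fun m => ?_
  by_cases hm : (m : ℕ) = 0
  · have hsum' : ∑ i, Δ (e i) = ∑ i, D (e i) := by simpa only [map_sum] using hsum
    rw [← add_sum_erase _ _ (mem_univ m), ← add_sum_erase _ _ (mem_univ m),
      sum_congr rfl fun i hi => heq i fun h => (mem_erase.mp hi).1 (Fin.ext (h.trans hm.symm))]
      at hsum'
    exact add_right_cancel hsum'
  · exact heq m hm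
end

section
/- Let E be an n-dimensional nilpotent evolution algebra with maximal nilindex and structure matrix A = (a_{ij}), with I_A = {(i,j): i+1 < j < n, a_{ij} ≠ 0} nonempty, and suppose gcd over (i,j) ∈ I_A of 2^{j−1} − 2^i equals 2. Then φ is an automorphism of E if and only if φ(e_1) = α e_1 + β e_n with α² = 1, and φ(e_i) = e_i for 2 ≤ i ≤ n. -/
/-!
Indices are 0-based: `e 0` and `e ⟨n - 1, _⟩` are the paper's `e_1` and `e_n`.

Write `c i j` for the `j`-th coordinate of `φ (e i)`. Since `(x * y)_m = ∑_{k < m} x_k y_k a_{km}`,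
multiplicativity of `φ` on basis vectors is a system of polynomial identities in `c`. Because
`a_{i,i+1} ≠ 0`, it forces `c` to be upper triangular (so its diagonal is nonzero, `φ` being
bijective), then zero off the diagonal outside the last column, with `c k k = c i i ^ 2` whenever
`a_{ik} ≠ 0` and `k < n - 1`. Hence `c k k = α ^ 2 ^ k` for `α = c 0 0`, each pair of `I_A` gives
`α ^ (2 ^ j - 2 ^ (i + 1)) = 1`, and the gcd condition yields `α ^ 2 = 1`, so `c k k = 1` for
`k ≥ 1`; a downward induction settles the last column. Conversely, `e (n - 1)` annihilates `E`,
so such a `φ` multiplies basis vectors as `diag(α, 1, …, 1)` does, and it is triangular with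
nonzero diagonal.
-/

open Finset

theorem Fin.exists_val_add_one_eq {n : ℕ} {i : Fin n} (hi : 0 < (i : ℕ)) :
    ∃ p : Fin n, (p : ℕ) + 1 = i :=
  ⟨⟨i - 1, by omega⟩, Nat.sub_add_cancel hi⟩

theorem pow_finsetGcd_eq_one {M ι : Type*} [Monoid M] {x : M} {s : Finset ι} {f : ι → ℕ}
    (h : ∀ i ∈ s, x ^ f i = 1) : x ^ s.gcd f = 1 :=
  orderOf_dvd_iff_pow_eq_one.mp <| Finset.dvd_gcd fun i hi => orderOf_dvd_of_pow_eq_one (h i hi)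

theorem LinearMap.map_mul_of_basis {R A ι : Type*} [CommSemiring R] [NonUnitalNonAssocSemiring A]
    [Module R A] [SMulCommClass R A A] [IsScalarTower R A A] (b : Module.Basis ι R A)
    (f : A →ₗ[R] A) (h : ∀ i j, f (b i * b j) = f (b i) * f (b j)) (x y : A) :
    f (x * y) = f x * f y := by
  have : (LinearMap.mul R A).compr₂ f = ((LinearMap.mul R A).comp f).compl₂ f :=
    b.ext fun i => b.ext fun j => by simpa using h i j
  simpa using LinearMap.congr_fun₂ this x y

theorem LinearMap.bijective_iff_repr_self_ne_zero {K M ι : Type*} [Field K] [AddCommGroup M]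
    [Module K M] [Fintype ι] [LinearOrder ι] (b : Module.Basis ι K M) (f : M →ₗ[K] M)
    (h : ∀ i j, j < i → b.repr (f (b i)) j = 0) :
    Function.Bijective f ↔ ∀ i, b.repr (f (b i)) i ≠ 0 := by
  have : Module.Finite K M := .of_basis b
  have htri : (LinearMap.toMatrix b b f).IsLowerTriangular := fun i j hij => by
    rw [LinearMap.toMatrix_apply]; exact h j i hij
  rw [← Module.End.isUnit_iff, LinearMap.isUnit_iff_isUnit_det, ← LinearMap.det_toMatrix b,
    Matrix.det_of_isLowerTriangular _ htri, isUnit_iff_ne_zero, Finset.prod_ne_zero_iff]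
  simp [LinearMap.toMatrix_apply]

structure IsTriangularNaturalBasis {K E : Type*} [Field K] [NonUnitalNonAssocRing E] [Module K E]
    {n : ℕ} (e : Module.Basis (Fin n) K E) (a : Fin n → Fin n → K) : Prop where
  mul_of_ne : ∀ i j, i ≠ j → e i * e j = 0
  mul_self : ∀ i, e i * e i = ∑ j ∈ univ.filter (fun j => i < j), a i j • e j

namespace IsTriangularNaturalBasis

variable {K E : Type*} [Field K] [NonUnitalNonAssocRing E] [Module K E]
  {n : ℕ} {a : Fin n → Fin n → K} {e : Module.Basis (Fin n) K E}
  (he : IsTriangularNaturalBasis e a)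
include he

theorem repr_mul_self (i m : Fin n) : e.repr (e i * e i) m = if i < m then a i m else 0 := by
  rw [he.mul_self i, map_sum, Finsupp.finsetSum_apply]
  simp [Finsupp.single_apply]

section Last

variable {l : Fin n} (hl : (l : ℕ) + 1 = n)
include hl

theorem mul_self_last : e l * e l = 0 := by
  rw [he.mul_self l]
  exact sum_eq_zero fun k hk => by rw [mem_filter_univ] at hk; omega

theorem mul_last (i : Fin n) : e i * e l = 0 := by
  rcases eq_or_ne i l with rfl | h
  · exact he.mul_self_last hl
  · exact he.mul_of_ne i l h

theorem last_mul (i : Fin n) : e l * e i = 0 := by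
  rcases eq_or_ne l i with rfl | h
  · exact he.mul_self_last hl
  · exact he.mul_of_ne l i h

end Last

variable [SMulCommClass K E E] [IsScalarTower K E E]

theorem repr_mul (x y : E) (m : Fin n) :
    e.repr (x * y) m = ∑ k ∈ univ.filter (· < m), e.repr x k * e.repr y k * a k m := by
  have hxy : x * y = ∑ k, (e.repr x k * e.repr y k) • (e k * e k) := by
    conv_lhs => rw [← e.sum_repr x, ← e.sum_repr y]
    simp_rw [Finset.sum_mul_sum, smul_mul_smul_comm]
    exact sum_congr rfl fun i _ => sum_eq_single i
      (fun j _ hj => by rw [he.mul_of_ne i j (Ne.symm hj), smul_zero]) (by simp)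
  rw [hxy, map_sum, Finsupp.finsetSum_apply]
  simp [he.repr_mul_self, Finset.sum_ite]

section Multiplicative

variable {φ : E →ₗ[K] E} (hφ : ∀ x y, φ (x * y) = φ x * φ y)
include hφ

theorem repr_map_mul_of_ne {i j : Fin n} (hij : i ≠ j) (m : Fin n) :
    ∑ k ∈ univ.filter (· < m), e.repr (φ (e i)) k * e.repr (φ (e j)) k * a k m = 0 := by
  rw [← he.repr_mul, ← hφ, he.mul_of_ne i j hij, map_zero, map_zero, Finsupp.zero_apply]

theorem repr_map_mul_self (i m : Fin n) :
    ∑ k ∈ univ.filter (· < m), e.repr (φ (e i)) k ^ 2 * a k m =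
      ∑ k ∈ univ.filter (i < ·), a i k * e.repr (φ (e k)) m := by
  simp_rw [sq, ← he.repr_mul, ← hφ, he.mul_self i, map_sum, map_smul, Finsupp.finsetSum_apply,
    Finsupp.smul_apply, smul_eq_mul]

variable (ha : ∀ i k : Fin n, (i : ℕ) + 1 = k → a i k ≠ 0)
include ha

theorem repr_map_eq_zero_of_lt {i j : Fin n} (hji : j < i) : e.repr (φ (e i)) j = 0 := by
  induction j using WellFoundedLT.induction generalizing i with | _ j ihj => ?_
  induction i using WellFoundedGT.induction with | _ i ihi => ?_
  obtain ⟨p, hp⟩ := Fin.exists_val_add_one_eq (i := i) (by omega)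
  -- In coordinate `j` of `φ (e p * e p)`, the square side vanishes by induction on `j` and the
  -- other side reduces to `a p i * c i j` by downward induction on `i`.
  have key := he.repr_map_mul_self hφ p j
  rw [sum_eq_zero fun k hk => by
      rw [mem_filter_univ] at hk
      rw [ihj k hk (by omega), zero_pow two_ne_zero, zero_mul],
    sum_eq_single_of_mem i ((mem_filter_univ i).mpr (by omega)) fun k hk hki => by
      rw [mem_filter_univ] at hk
      rw [ihi k (by omega) (by omega), mul_zero]] at key
  exact (mul_eq_zero.mp key.symm).resolve_left (ha p i hp)

variable (hbij : Function.Bijective φ)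
include hbij

theorem repr_map_self_ne_zero (i : Fin n) : e.repr (φ (e i)) i ≠ 0 :=
  (LinearMap.bijective_iff_repr_self_ne_zero e φ fun _ _ => he.repr_map_eq_zero_of_lt hφ ha).mp
    hbij i

theorem repr_map_eq_zero_of_ne {i j : Fin n} (hij : i ≠ j) (hj : (j : ℕ) + 1 < n) :
    e.repr (φ (e i)) j = 0 := by
  have key := he.repr_map_mul_of_ne hφ hij ⟨j + 1, hj⟩
  rw [sum_eq_single_of_mem j ((mem_filter_univ j).mpr (Nat.lt_succ_self _)) fun k hk hkj => by
    have hk' : (k : ℕ) < j + 1 := (mem_filter_univ k).mp hk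
    rw [he.repr_map_eq_zero_of_lt hφ ha (lt_of_le_of_ne (by omega) hkj), mul_zero, zero_mul]]
    at key
  simpa [he.repr_map_self_ne_zero hφ ha hbij, ha j ⟨j + 1, hj⟩ rfl] using key

theorem sq_repr_map_self_mul {i m : Fin n} (him : i < m) :
    e.repr (φ (e i)) i ^ 2 * a i m = ∑ k ∈ univ.filter (i < ·), a i k * e.repr (φ (e k)) m := by
  rw [← he.repr_map_mul_self hφ, sum_eq_single_of_mem i ((mem_filter_univ i).mpr him)
    fun k hk hki => by
      rw [mem_filter_univ] at hk
      rw [he.repr_map_eq_zero_of_ne hφ ha hbij (Ne.symm hki) (by omega), zero_pow two_ne_zero,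
        zero_mul]]

theorem repr_map_self_eq_sq {i k : Fin n} (hik : i < k) (hk : (k : ℕ) + 1 < n)
    (hak : a i k ≠ 0) : e.repr (φ (e k)) k = e.repr (φ (e i)) i ^ 2 := by
  have key := he.sq_repr_map_self_mul hφ ha hbij hik
  rw [sum_eq_single_of_mem k ((mem_filter_univ k).mpr hik) fun m _ hmk => by
    rw [he.repr_map_eq_zero_of_ne hφ ha hbij hmk hk, mul_zero]] at key
  exact mul_left_cancel₀ hak (by linear_combination -key)

theorem repr_map_self_eq_pow {i₀ : Fin n} (h₀ : (i₀ : ℕ) = 0) {k : Fin n} (hk : (k : ℕ) + 1 < n) :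
    e.repr (φ (e k)) k = e.repr (φ (e i₀)) i₀ ^ 2 ^ (k : ℕ) := by
  induction k using WellFoundedLT.induction with | _ k ih => ?_
  rcases Nat.eq_zero_or_pos k with hk0 | hk0
  · rw [show k = i₀ by omega, h₀, pow_zero, pow_one]
  · obtain ⟨p, hp⟩ := Fin.exists_val_add_one_eq hk0
    rw [he.repr_map_self_eq_sq hφ ha hbij (by omega) hk (ha p k hp), ih p (by omega) (by omega),
      ← pow_mul, ← pow_succ, hp]

theorem repr_map_self_pow_gcd_eq_one {i₀ : Fin n} (h₀ : (i₀ : ℕ) = 0)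
    (s : Finset (Fin n × Fin n)) (hs : ∀ p ∈ s, p.1 < p.2 ∧ (p.2 : ℕ) + 1 < n ∧ a p.1 p.2 ≠ 0) :
    e.repr (φ (e i₀)) i₀ ^ s.gcd (fun p => 2 ^ (p.2 : ℕ) - 2 ^ ((p.1 : ℕ) + 1)) = 1 := by
  refine pow_finsetGcd_eq_one fun p hp => ?_
  obtain ⟨h12, h2, ha12⟩ := hs p hp
  have hα := he.repr_map_self_ne_zero hφ ha hbij i₀
  have key := he.repr_map_self_eq_sq hφ ha hbij h12 h2 ha12
  rw [he.repr_map_self_eq_pow hφ ha hbij h₀ h2,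
    he.repr_map_self_eq_pow hφ ha hbij h₀ (k := p.1) (by omega), ← pow_mul, ← pow_succ] at key
  rw [pow_sub₀ _ hα (Nat.pow_le_pow_right two_pos h12), key, mul_inv_cancel₀ (pow_ne_zero _ hα)]

theorem map_basis_eq_smul_add_smul_last {i l : Fin n} (hl : (l : ℕ) + 1 = n) (hil : i ≠ l) :
    φ (e i) = e.repr (φ (e i)) i • e i + e.repr (φ (e i)) l • e l := by
  refine e.ext_elem_iff.mpr fun j => ?_
  simp only [map_add, map_smul, e.repr_self, Finsupp.add_apply, Finsupp.smul_apply,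
    Finsupp.single_apply, smul_eq_mul, mul_ite, mul_one, mul_zero]
  rcases eq_or_ne j l with rfl | hjl
  · simp [hil]
  rcases eq_or_ne i j with rfl | hij
  · simp [hjl.symm]
  · rw [if_neg hij, if_neg (Ne.symm hjl), add_zero]
    exact he.repr_map_eq_zero_of_ne hφ ha hbij hij (by omega)

variable {i₀ : Fin n} (h₀ : (i₀ : ℕ) = 0) (hα : e.repr (φ (e i₀)) i₀ ^ 2 = 1)
include h₀ hα

theorem sq_repr_map_self_eq_one {k : Fin n} (hk : (k : ℕ) + 1 < n) :
    e.repr (φ (e k)) k ^ 2 = 1 := by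
  rw [he.repr_map_self_eq_pow hφ ha hbij h₀ hk, ← pow_mul, ← pow_succ, pow_succ', pow_mul, hα,
    one_pow]

theorem repr_map_self_eq_one {k : Fin n} (hk₁ : 1 ≤ (k : ℕ)) (hk : (k : ℕ) + 1 < n) :
    e.repr (φ (e k)) k = 1 := by
  obtain ⟨p, hp⟩ := Fin.exists_val_add_one_eq hk₁
  rw [he.repr_map_self_eq_sq hφ ha hbij (by omega) hk (ha p k hp),
    he.sq_repr_map_self_eq_one hφ ha hbij h₀ hα (by omega)]

variable {l : Fin n} (hl : (l : ℕ) + 1 = n)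
include hl

theorem repr_map_last {i : Fin n} (hi : 1 ≤ (i : ℕ)) :
    e.repr (φ (e i)) l = if i = l then 1 else 0 := by
  induction i using WellFoundedGT.induction with | _ i ih => ?_
  obtain ⟨p, hp⟩ := Fin.exists_val_add_one_eq hi
  have hil : i ≤ l := by omega
  -- Coordinate `l` of `φ (e p * e p)` minus its value for `φ = id`: only `k = i` survives.
  have key : ∑ k ∈ univ.filter (p < ·),
      a p k * (e.repr (φ (e k)) l - if k = l then 1 else 0) = 0 := by
    simp only [mul_sub, sum_sub_distrib, mul_ite, mul_one, mul_zero]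
    rw [← he.sq_repr_map_self_mul hφ ha hbij (by omega),
      he.sq_repr_map_self_eq_one hφ ha hbij h₀ hα (by omega), one_mul, sum_ite_eq']
    simp [show p < l by omega]
  rw [sum_eq_single_of_mem i ((mem_filter_univ i).mpr (by omega)) fun k hk hki => by
    rw [mem_filter_univ] at hk
    rw [ih k (by omega) (by omega), sub_self, mul_zero]] at key
  exact sub_eq_zero.mp ((mul_eq_zero.mp key).resolve_left (ha p i hp))

theorem map_basis_eq_self {i : Fin n} (hi : 1 ≤ (i : ℕ)) : φ (e i) = e i := by
  refine e.ext_elem_iff.mpr fun j => ?_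
  rw [e.repr_self, Finsupp.single_apply]
  rcases eq_or_ne j l with rfl | hj
  · exact he.repr_map_last hφ ha hbij h₀ hα hl hi
  split_ifs with hij
  · subst hij; exact he.repr_map_self_eq_one hφ ha hbij h₀ hα hi (by omega)
  · exact he.repr_map_eq_zero_of_ne hφ ha hbij hij (by omega)

end Multiplicative

section Converse

variable {l : Fin n} (hl : (l : ℕ) + 1 = n)
include hl

theorem smul_add_smul_last_mul (s t s' t' : K) (i j : Fin n) :
    (s • e i + t • e l) * (s' • e j + t' • e l) = (s * s') • (e i * e j) := by
  simp only [add_mul, mul_add, smul_mul_smul_comm, he.mul_last hl, he.last_mul hl, smul_zero,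
    add_zero]

theorem bijective_and_map_mul {φ : E →ₗ[K] E} {i₀ : Fin n} (h₀ : (i₀ : ℕ) = 0) (hn : 2 ≤ n)
    {α β : K} (hα : α ^ 2 = 1) (hφ₀ : φ (e i₀) = α • e i₀ + β • e l)
    (hφ : ∀ i : Fin n, 1 ≤ (i : ℕ) → φ (e i) = e i) :
    Function.Bijective φ ∧ ∀ x y, φ (x * y) = φ x * φ y := by
  have hshape : ∀ i, ∃ σ τ : K, σ ^ 2 = 1 ∧ φ (e i) = σ • e i + τ • e l := by
    intro i
    rcases Nat.eq_zero_or_pos i with hi | hi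
    · obtain rfl : i = i₀ := by omega
      exact ⟨α, β, hα, hφ₀⟩
    · exact ⟨1, 0, one_pow 2, by simp [hφ i hi]⟩
  have hsq : ∀ i, φ (e i * e i) = e i * e i := fun i => by
    rw [he.mul_self, map_sum]
    exact sum_congr rfl fun k hk => by
      rw [mem_filter_univ] at hk
      rw [map_smul, hφ k (by omega)]
  have hrepr : ∀ i : Fin n, 1 ≤ (i : ℕ) → ∀ j, e.repr (φ (e i)) j = if i = j then 1 else 0 :=
    fun i hi j => by rw [hφ i hi, e.repr_self, Finsupp.single_apply]
  refine ⟨(LinearMap.bijective_iff_repr_self_ne_zero e φ fun i j hji => ?_).mpr fun i => ?_,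
    LinearMap.map_mul_of_basis e φ fun i j => ?_⟩
  · rw [hrepr i (by omega) j, if_neg hji.ne']
  · rcases Nat.eq_zero_or_pos i with hi | hi
    · obtain rfl : i = i₀ := by omega
      simp only [hφ₀, map_add, map_smul, e.repr_self, Finsupp.add_apply, Finsupp.smul_apply,
        Finsupp.single_apply, if_neg (show l ≠ i by omega), smul_eq_mul, ↓reduceIte, mul_one,
        mul_zero, add_zero]
      rintro rfl
      norm_num at hα
    · simp [hrepr i hi]
  · rcases eq_or_ne i j with rfl | hij
    · obtain ⟨σ, τ, hσ, hi⟩ := hshape i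
      rw [hsq, hi, he.smul_add_smul_last_mul hl, ← sq, hσ, one_smul]
    · obtain ⟨σ, τ, -, hi⟩ := hshape i
      obtain ⟨σ', τ', -, hj⟩ := hshape j
      rw [hi, hj, he.smul_add_smul_last_mul hl, he.mul_of_ne i j hij, map_zero, smul_zero]

end Converse

end IsTriangularNaturalBasis

/-- for an `n`-dimensional nilpotent evolution algebra of maximal nilindex
with `I_A = {(i,j) : i+1 < j < n, a_{ij} ≠ 0}` nonempty and
`gcd_{(i,j)∈I_A}(2^{j−1} − 2^i) = 2`, a linear map `φ` is an automorphism iff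
`φ(e_1) = α e_1 + β e_n` with `α² = 1` and `φ(e_i) = e_i` for `2 ≤ i ≤ n`. -/
theorem stmt13 {K E : Type*} [Field K] [DecidableEq K]
    [NonUnitalNonAssocRing E]
    [Module K E] [SMulCommClass K E E] [IsScalarTower K E E]
    (n : ℕ) (hn : 2 ≤ n) (a : Fin n → Fin n → K) (e : Module.Basis (Fin n) K E)
    (hzero : ∀ i j : Fin n, i ≠ j → e i * e j = 0)
    (hsq : ∀ i : Fin n, e i * e i = ∑ j ∈ Finset.univ.filter (fun j => i < j), a i j • e j)
    (hne : ∀ i : Fin n, ∀ hi : (i : ℕ) + 1 < n, a i ⟨(i : ℕ) + 1, hi⟩ ≠ 0)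
    (IA : Finset (Fin n × Fin n))
    (hIA : IA = Finset.univ.filter
      (fun p : Fin n × Fin n => ((p.1 : ℕ) + 1) + 1 < (p.2 : ℕ) + 1 ∧ (p.2 : ℕ) + 1 < n
        ∧ a p.1 p.2 ≠ 0))
    (hgcd : IA.gcd (fun p : Fin n × Fin n => 2 ^ (p.2 : ℕ) - 2 ^ ((p.1 : ℕ) + 1)) = 2)
    (φ : E →ₗ[K] E) :
    (Function.Bijective φ ∧ ∀ x y : E, φ (x * y) = φ x * φ y) ↔
    ∃ α β : K, α ^ 2 = 1 ∧
      φ (e ⟨0, by omega⟩) = α • e ⟨0, by omega⟩ + β • e ⟨n - 1, by omega⟩ ∧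
      ∀ i : Fin n, 1 ≤ (i : ℕ) → φ (e i) = e i := by
  have he : IsTriangularNaturalBasis e a := ⟨hzero, hsq⟩
  have ha : ∀ i k : Fin n, (i : ℕ) + 1 = k → a i k ≠ 0 := fun i k h => by
    simpa [Fin.ext_iff, h] using hne i (h ▸ k.isLt)
  have hl : ((⟨n - 1, by omega⟩ : Fin n) : ℕ) + 1 = n := Nat.sub_add_cancel (by omega)
  constructor
  · rintro ⟨hbij, hφ⟩
    have hα : e.repr (φ (e ⟨0, by omega⟩)) ⟨0, by omega⟩ ^ 2 = 1 := by
      rw [← hgcd]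
      refine he.repr_map_self_pow_gcd_eq_one hφ ha hbij rfl IA fun p hp => ?_
      simp only [hIA, mem_filter, mem_univ, true_and] at hp
      exact ⟨by omega, hp.2⟩
    exact ⟨_, _, hα, he.map_basis_eq_smul_add_smul_last hφ ha hbij hl
      (Fin.ne_of_val_ne (show 0 ≠ n - 1 by omega)),
      fun i hi => he.map_basis_eq_self hφ ha hbij rfl hα hl hi⟩
  · rintro ⟨α, β, hα, hφ₀, hφ⟩
    exact he.bijective_and_map_mul hl rfl hn hα hφ₀ hφ
end

section
/- Let E be an n-dimensional nilpotent evolution algebra with maximal nilindex and structure matrix A with I_A = {(i,j): i+1 < j < n, a_{ij} ≠ 0} nonempty. Then for every automorphism φ of E, the scalar α = φ_{11} satisfies α^{2^{j−1} − 2^i} = 1 for every (i,j) ∈ I_A; hence α^η = 1 where η = gcd_{(i,j)∈I_A}(2^{j−1} − 2^i). -/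
/-!
Indices run from `0`. Let `V k` be the span of `e k, …, e (n-1)` (`e.CoordsVanishBelow k`). Since
`e j * e j = a j (j+1) • e (j+1) + (later terms)` with `a j (j+1) ≠ 0`, an element lies in `V k`
exactly when all its products with `E` lie in `V (k+1)`; by downward induction from `V n = 0`
every surjective multiplicative linear map preserves each `V k`. Applied to `φ` and `φ⁻¹` this
makes `φ` triangular with nonzero diagonal. For `i ≠ k < n - 1`, the `e (k+1)`-coordinate of
`φ (e i) * φ (e k) = 0` is `φ_{ik} φ_{kk} a_{k,k+1}`, so `φ_{ik} = 0`. Comparing `e j`-coordinates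
of `φ (e i * e i) = φ (e i) * φ (e i)` then gives `a_{ij} φ_{jj} = φ_{ii}² a_{ij}`: along
`a_{i,i+1} ≠ 0` this yields `φ_{ii} = α ^ 2 ^ i`, and on `I_A` it yields
`α ^ 2 ^ j = α ^ 2 ^ (i+1)`.
-/

open Module Finset

theorem Module.Basis.mul_eq_sum_smul_mul_self {ι R E : Type*} [Fintype ι] [CommSemiring R]
    [NonUnitalNonAssocSemiring E] [Module R E] [SMulCommClass R E E] [IsScalarTower R E E]
    (e : Basis ι R E) (he : ∀ i j, i ≠ j → e i * e j = 0) (x y : E) :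
    x * y = ∑ k, (e.repr x k * e.repr y k) • (e k * e k) := by
  conv_lhs => rw [← e.sum_repr x, ← e.sum_repr y]
  simp_rw [Finset.sum_mul, Finset.mul_sum, smul_mul_smul_comm]
  refine Finset.sum_congr rfl fun k _ => Fintype.sum_eq_single k fun l hl => ?_
  rw [he k l (Ne.symm hl), smul_zero]

theorem Module.Basis.repr_map_apply {ι R M : Type*} [Fintype ι] [DecidableEq ι] [CommSemiring R]
    [AddCommMonoid M] [Module R M] (e : Basis ι R M) (φ : M →ₗ[R] M) (x : M) (k : ι) :
    e.repr (φ x) k = ∑ i, e.repr x i * e.repr (φ (e i)) k := by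
  rw [← LinearMap.toMatrix_mulVec_repr e e φ]
  simp [Matrix.mulVec, dotProduct, LinearMap.toMatrix_apply, mul_comm]

structure IsMaxNilindexNaturalBasis {K E : Type*} [Field K] [NonUnitalNonAssocRing E] [Module K E]
    {n : ℕ} (e : Basis (Fin n) K E) (a : Fin n → Fin n → K) : Prop where
  mul_of_ne : ∀ i j, i ≠ j → e i * e j = 0
  mul_self : ∀ i, e i * e i = ∑ j ∈ univ.filter (fun j => i < j), a i j • e j
  coeff_succ_ne_zero : ∀ i : Fin n, ∀ hi : (i : ℕ) + 1 < n, a i ⟨i + 1, hi⟩ ≠ 0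

def Module.Basis.CoordsVanishBelow {R M : Type*} [Semiring R] [AddCommMonoid M] [Module R M]
    {n : ℕ} (e : Basis (Fin n) R M) (k : ℕ) (x : M) : Prop :=
  ∀ j : Fin n, (j : ℕ) < k → e.repr x j = 0

theorem Module.Basis.coordsVanishBelow_self {R M : Type*} [Semiring R] [AddCommMonoid M]
    [Module R M] {n : ℕ} (e : Basis (Fin n) R M) (i : Fin n) :
    e.CoordsVanishBelow i (e i) := fun j hj => by
  simp [Fin.ne_of_lt (Fin.lt_def.mpr hj)]

namespace IsMaxNilindexNaturalBasis

variable {K E : Type*} [Field K] [NonUnitalNonAssocRing E] [Module K E] {n : ℕ}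
  {e : Basis (Fin n) K E} {a : Fin n → Fin n → K}

theorem repr_mul_self (h : IsMaxNilindexNaturalBasis e a) (i j : Fin n) :
    e.repr (e i * e i) j = if i < j then a i j else 0 := by
  simp [h.mul_self, Finsupp.single_apply]

variable [SMulCommClass K E E] [IsScalarTower K E E]

theorem repr_mul (h : IsMaxNilindexNaturalBasis e a) (x y : E) (m : Fin n) :
    e.repr (x * y) m = ∑ k ∈ univ.filter (· < m), e.repr x k * e.repr y k * a k m := by
  rw [e.mul_eq_sum_smul_mul_self h.mul_of_ne, Finset.sum_filter]
  simp [h.repr_mul_self]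

theorem repr_mul_succ (h : IsMaxNilindexNaturalBasis e a) (x : E) {y : E} {k : Fin n}
    (hk : (k : ℕ) + 1 < n) (hy : e.CoordsVanishBelow k y) :
    e.repr (x * y) ⟨k + 1, hk⟩ = e.repr x k * e.repr y k * a k ⟨k + 1, hk⟩ := by
  rw [h.repr_mul, Finset.sum_eq_single k]
  · intro l hl hlk
    have hlk' : (l : ℕ) < k := by
      have : (l : ℕ) < k + 1 := (Finset.mem_filter.mp hl).2
      omega
    rw [hy l hlk', mul_zero, zero_mul]
  · simp [Fin.lt_def]

theorem coordsVanishBelow_succ_mul (h : IsMaxNilindexNaturalBasis e a) {k : ℕ} {x : E}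
    (hx : e.CoordsVanishBelow k x) (y : E) : e.CoordsVanishBelow (k + 1) (x * y) := by
  intro m hm
  rw [h.repr_mul]
  refine Finset.sum_eq_zero fun l hl => ?_
  have hlm : (l : ℕ) < m := (Finset.mem_filter.mp hl).2
  rw [hx l (by omega), zero_mul, zero_mul]

theorem coordsVanishBelow_of_forall_mul (h : IsMaxNilindexNaturalBasis e a) {k : ℕ} (hk : k < n)
    {x : E} (hx : ∀ y, e.CoordsVanishBelow (k + 1) (x * y)) : e.CoordsVanishBelow k x := by
  intro j hj
  have hj' : (j : ℕ) + 1 < n := by omega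
  have := hx (e j) ⟨j + 1, hj'⟩ (by simpa using hj)
  rw [h.repr_mul_succ x hj' (e.coordsVanishBelow_self j), e.repr_self, Finsupp.single_eq_same,
    mul_one] at this
  exact (mul_eq_zero.mp this).resolve_right (h.coeff_succ_ne_zero j hj')

theorem map_coordsVanishBelow (h : IsMaxNilindexNaturalBasis e a) {φ : E →ₗ[K] E}
    (hmul : ∀ x y, φ (x * y) = φ x * φ y) (hsurj : Function.Surjective φ) {k : ℕ} (hk : k ≤ n)
    {x : E} (hx : e.CoordsVanishBelow k x) : e.CoordsVanishBelow k (φ x) := by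
  induction hk using Nat.decreasingInduction generalizing x with
  | self =>
    have hx0 : x = 0 := e.repr.injective (Finsupp.ext fun j => by simpa using hx j j.isLt)
    simpa [hx0] using hx
  | of_succ k hk ih =>
    refine h.coordsVanishBelow_of_forall_mul hk fun y => ?_
    obtain ⟨y, rfl⟩ := hsurj y
    rw [← hmul]
    exact ih (h.coordsVanishBelow_succ_mul hx y)

theorem repr_map_self_ne_zero (h : IsMaxNilindexNaturalBasis e a) {φ : E →ₗ[K] E}
    (hmul : ∀ x y, φ (x * y) = φ x * φ y) (hbij : Function.Bijective φ) (k : Fin n) :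
    e.repr (φ (e k)) k ≠ 0 := by
  intro hk
  let ψ := LinearEquiv.ofBijective φ hbij
  have hmul_symm : ∀ x y, ψ.symm (x * y) = ψ.symm x * ψ.symm y := fun x y =>
    ψ.injective (by simp [ψ, hmul])
  have hy : e.CoordsVanishBelow k (ψ.symm (e k)) :=
    h.map_coordsVanishBelow hmul_symm ψ.symm.surjective k.isLt.le (e.coordsVanishBelow_self k)
  have : e.repr (φ (ψ.symm (e k))) k = 0 := by
    rw [e.repr_map_apply]
    refine Fintype.sum_eq_zero _ fun i => ?_
    rcases lt_trichotomy i k with hik | rfl | hki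
    · rw [hy i hik, zero_mul]
    · rw [hk, mul_zero]
    · rw [h.map_coordsVanishBelow hmul hbij.2 i.isLt.le (e.coordsVanishBelow_self i) k hki,
        mul_zero]
  simp [show φ (ψ.symm (e k)) = e k from ψ.apply_symm_apply _] at this

theorem repr_map_eq_zero_of_ne (h : IsMaxNilindexNaturalBasis e a) {φ : E →ₗ[K] E}
    (hmul : ∀ x y, φ (x * y) = φ x * φ y) (hbij : Function.Bijective φ) {i k : Fin n}
    (hk : (k : ℕ) + 1 < n) (hik : i ≠ k) : e.repr (φ (e i)) k = 0 := by
  have hzero : e.repr (φ (e i) * φ (e k)) ⟨k + 1, hk⟩ = 0 := by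
    rw [← hmul, h.mul_of_ne i k hik]
    simp
  rw [h.repr_mul_succ _ hk
    (h.map_coordsVanishBelow hmul hbij.2 k.isLt.le (e.coordsVanishBelow_self k))] at hzero
  simpa [h.repr_map_self_ne_zero hmul hbij k, h.coeff_succ_ne_zero k hk] using hzero

theorem repr_map_self_eq_sq (h : IsMaxNilindexNaturalBasis e a) {φ : E →ₗ[K] E}
    (hmul : ∀ x y, φ (x * y) = φ x * φ y) (hbij : Function.Bijective φ) {i j : Fin n}
    (hij : i < j) (hj : (j : ℕ) + 1 < n) (ha : a i j ≠ 0) :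
    e.repr (φ (e j)) j = e.repr (φ (e i)) i ^ 2 := by
  have h₁ : e.repr (φ (e i * e i)) j = a i j * e.repr (φ (e j)) j := by
    rw [e.repr_map_apply, Fintype.sum_eq_single j fun l hl =>
      by rw [h.repr_map_eq_zero_of_ne hmul hbij hj hl, mul_zero], h.repr_mul_self, if_pos hij]
  have h₂ : e.repr (φ (e i) * φ (e i)) j = e.repr (φ (e i)) i ^ 2 * a i j := by
    rw [h.repr_mul, Finset.sum_eq_single i]
    · ring
    · intro l hl hli
      have hl' : (l : ℕ) + 1 < n := by
        have : l < j := (Finset.mem_filter.mp hl).2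
        omega
      rw [h.repr_map_eq_zero_of_ne hmul hbij hl' (Ne.symm hli), mul_zero, zero_mul]
    · simp [hij]
  rw [hmul, h₂] at h₁
  exact mul_left_cancel₀ ha (by rw [← h₁]; ring)

theorem repr_map_self_eq_pow (h : IsMaxNilindexNaturalBasis e a) {φ : E →ₗ[K] E}
    (hmul : ∀ x y, φ (x * y) = φ x * φ y) (hbij : Function.Bijective φ) (i : ℕ)
    (hi : i + 1 < n) :
    e.repr (φ (e ⟨i, by omega⟩)) ⟨i, by omega⟩ =
      e.repr (φ (e ⟨0, by omega⟩)) ⟨0, by omega⟩ ^ 2 ^ i := by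
  induction i with
  | zero => simp
  | succ i ih =>
    have hi' : i + 1 < n := by omega
    rw [h.repr_map_self_eq_sq hmul hbij (i := ⟨i, by omega⟩) (Nat.lt_succ_self i) hi
      (h.coeff_succ_ne_zero ⟨i, by omega⟩ hi'), ih hi', ← pow_mul, pow_succ]

end IsMaxNilindexNaturalBasis

/-- for an `n`-dimensional nilpotent evolution algebra of maximal nilindex
with `I_A = {(i,j) : i+1 < j < n, a_{ij} ≠ 0}` nonempty, every automorphism `φ` has
`α = φ_{11}` satisfying `α^{2^{j−1} − 2^i} = 1` for all `(i,j) ∈ I_A`; hence `α^η = 1`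
where `η = gcd_{(i,j)∈I_A}(2^{j−1} − 2^i)`. -/
theorem stmt18 {K E : Type*} [Field K] [DecidableEq K]
    [NonUnitalNonAssocRing E]
    [Module K E] [SMulCommClass K E E] [IsScalarTower K E E]
    (n : ℕ) (hn : 2 ≤ n) (a : Fin n → Fin n → K) (e : Module.Basis (Fin n) K E)
    (hzero : ∀ i j : Fin n, i ≠ j → e i * e j = 0)
    (hsq : ∀ i : Fin n, e i * e i = ∑ j ∈ Finset.univ.filter (fun j => i < j), a i j • e j)
    (hne : ∀ i : Fin n, ∀ hi : (i : ℕ) + 1 < n, a i ⟨(i : ℕ) + 1, hi⟩ ≠ 0)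
    (IA : Finset (Fin n × Fin n))
    (hIA : IA = Finset.univ.filter
      (fun p : Fin n × Fin n => ((p.1 : ℕ) + 1) + 1 < (p.2 : ℕ) + 1 ∧ (p.2 : ℕ) + 1 < n
        ∧ a p.1 p.2 ≠ 0))
    (φ : E →ₗ[K] E) (hbij : Function.Bijective φ)
    (hmul : ∀ x y : E, φ (x * y) = φ x * φ y)
    (α : K) (hα : α = e.repr (φ (e ⟨0, by omega⟩)) ⟨0, by omega⟩) :
    (∀ p : Fin n × Fin n, p ∈ IA → α ^ (2 ^ (p.2 : ℕ) - 2 ^ ((p.1 : ℕ) + 1)) = 1) ∧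
    α ^ (IA.gcd (fun p : Fin n × Fin n => 2 ^ (p.2 : ℕ) - 2 ^ ((p.1 : ℕ) + 1))) = 1 := by
  have h : IsMaxNilindexNaturalBasis e a := ⟨hzero, hsq, hne⟩
  have hα0 : α ≠ 0 := hα ▸ h.repr_map_self_ne_zero hmul hbij _
  have hdiag (i : Fin n) (hi : (i : ℕ) + 1 < n) : e.repr (φ (e i)) i = α ^ 2 ^ (i : ℕ) := by
    simpa [← hα] using h.repr_map_self_eq_pow hmul hbij i hi
  have hIA_pow : ∀ p ∈ IA, α ^ (2 ^ (p.2 : ℕ) - 2 ^ ((p.1 : ℕ) + 1)) = 1 := by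
    intro p hp
    rw [hIA, Finset.mem_filter] at hp
    obtain ⟨-, hij, hj, ha⟩ := hp
    have hpow := h.repr_map_self_eq_sq hmul hbij (Fin.lt_def.mpr (by omega)) hj ha
    rw [hdiag p.1 (by omega), hdiag p.2 hj, ← pow_mul, ← pow_succ] at hpow
    rw [pow_sub₀ α hα0 (Nat.pow_le_pow_right two_pos (by omega)), hpow,
      mul_inv_cancel₀ (pow_ne_zero _ hα0)]
  exact ⟨hIA_pow, orderOf_dvd_iff_pow_eq_one.mp
    (Finset.dvd_gcd fun p hp => orderOf_dvd_of_pow_eq_one (hIA_pow p hp))⟩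
end
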